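/- arXiv:1801.04209 — 7 statements merged into one kernel-verified Lean document; each statement's English description precedes it below -/
import Mathlib

section
/- The map φ ↦ V_φ from L^∞(𝕋) to the bounded operators on H² is injective: if φ, ψ ∈ L^∞(𝕋) satisfy V_φ = V_ψ, then φ = ψ (as elements of L^∞(𝕋)). -/
/-! Since `W* e_i = e_{2i}` and `P` is self-adjoint and fixes `e_{2i}` for `i ≥ 0`, the matrix entry
`⟪e_i, V_φ e_{2n}⟫` equals `⟪e_{2i}, M_φ e_n⟫ = φ̂(2i - n)`. Every integer has the form `2i - n`
with `i, n ≥ 0`, so `V_φ` determines all Fourier coefficients of `φ`, and these determine `M_φ`. -/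

open scoped InnerProductSpace ComplexInnerProductSpace

namespace HilbertBasis

variable {ι 𝕜 E G : Type*} [RCLike 𝕜] [NormedAddCommGroup E] [InnerProductSpace 𝕜 E]
  [NormedAddCommGroup G] [NormedSpace 𝕜 G]

theorem ext_inner (b : HilbertBasis ι 𝕜 E) {x y : E} (h : ∀ i, ⟪b i, x⟫_𝕜 = ⟪b i, y⟫_𝕜) :
    x = y :=
  b.repr.injective <| lp.ext <| funext fun i => by simp only [b.repr_apply_apply, h i]

theorem clm_ext (b : HilbertBasis ι 𝕜 E) {T S : E →L[𝕜] G} (h : ∀ i, T (b i) = S (b i)) :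
    T = S :=
  ContinuousLinearMap.ext_on (Submodule.dense_iff_topologicalClosure_eq_top.mpr b.dense_span)
    (by rintro _ ⟨i, rfl⟩; exact h i)

theorem clm_ext_inner (b : HilbertBasis ι 𝕜 E) {T S : E →L[𝕜] E}
    (h : ∀ i j, ⟪b i, T (b j)⟫_𝕜 = ⟪b i, S (b j)⟫_𝕜) : T = S :=
  b.clm_ext fun j => b.ext_inner (h · j)

theorem inner_apply_eq_of_forall_basis {F : Type*} [NormedAddCommGroup F] [InnerProductSpace 𝕜 F]
    (b : HilbertBasis ι 𝕜 E) {T : E →L[𝕜] F} {u : F} {v : E}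
    (h : ∀ i, ⟪u, T (b i)⟫_𝕜 = ⟪v, b i⟫_𝕜) (z : E) : ⟪u, T z⟫_𝕜 = ⟪v, z⟫_𝕜 := by
  simpa using congr($(b.clm_ext (T := (innerSL 𝕜 u).comp T) (S := innerSL 𝕜 v) h) z)

theorem inner_apply_eq_inner_two_mul (e : HilbertBasis ℤ 𝕜 E) {W : E →L[𝕜] E}
    (hW : ∀ n : ℤ, W (e (2 * n)) = e n ∧ W (e (2 * n + 1)) = 0) (i : ℤ) (z : E) :
    ⟪e i, W z⟫_𝕜 = ⟪e (2 * i), z⟫_𝕜 := by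
  refine e.inner_apply_eq_of_forall_basis (fun m => ?_) z
  have horth := orthonormal_iff_ite.mp e.orthonormal
  obtain ⟨k, rfl | rfl⟩ := Int.even_or_odd' m
  · simp only [(hW k).1, horth]
    congr 1
    simp only [eq_iff_iff]
    omega
  · simp only [(hW k).2, inner_zero_right, horth]
    rw [if_neg (by omega)]

end HilbertBasis

theorem Int.exists_two_mul_natCast_sub_natCast (m : ℤ) : ∃ i n : ℕ, 2 * (i : ℤ) - n = m :=
  ⟨m.toNat, (2 * m.toNat - m).toNat, by omega⟩

theorem inner_slantHToeplitz_two_mul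
    {𝕜 E : Type*} [RCLike 𝕜] [NormedAddCommGroup E] [InnerProductSpace 𝕜 E]
    {e : HilbertBasis ℤ 𝕜 E} {H2 : Submodule 𝕜 E} [CompleteSpace H2]
    {eH : ℕ → H2} (heH : ∀ n : ℕ, (eH n : E) = e (n : ℤ))
    {W : E →L[𝕜] E} (hW : ∀ n : ℤ, W (e (2 * n)) = e n ∧ W (e (2 * n + 1)) = 0)
    {K : H2 →L[𝕜] E} (hK : ∀ n : ℕ, K (eH (2 * n)) = e (n : ℤ))
    {a : ℤ → 𝕜} {M : E →L[𝕜] E} (hM : ∀ i j : ℤ, ⟪e i, M (e j)⟫_𝕜 = a (i - j))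
    {V : H2 →L[𝕜] H2}
    (hV : ∀ f : H2, (V f : E) = W ↑(Submodule.orthogonalProjectionOnto H2 (M (K f))))
    (i n : ℕ) : ⟪e i, (V (eH (2 * n)) : E)⟫_𝕜 = a (2 * i - n) := by
  have he : e (2 * (i : ℤ)) = eH (2 * i) := by rw [heH]; push_cast; rfl
  rw [hV, e.inner_apply_eq_inner_two_mul hW, he, ← Submodule.coe_inner,
    Submodule.inner_orthogonalProjectionOnto_eq_of_mem_left, hK, ← he, hM]

/- The symbol `φ` is encoded by its Laurent matrix `⟪e i, M_φ (e j)⟫ = φ̂(i - j)`; the inner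
product is conjugate-linear in the first slot, so this is the paper's `⟨M_φ e_j, e_i⟩`. -/
theorem slantHToeplitz_injective_general
    {L2 : Type*} [NormedAddCommGroup L2] [InnerProductSpace ℂ L2]
    -- the orthonormal (Fourier) basis `e n ↔ zⁿ` of `L²(𝕋)`
    (e : HilbertBasis ℤ ℂ L2)
    -- the Hardy space `H²`, the closed linear span of `{e n : n ≥ 0}`
    (H2 : Submodule ℂ L2) [CompleteSpace H2]
    (eH : ℕ → H2) (heH : ∀ n : ℕ, (eH n : L2) = e (n : ℤ))
    -- the operator `W`: `W e_{2n} = e n`, `W e_{2n+1} = 0` for all `n ∈ ℤ`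
    (W : L2 →L[ℂ] L2)
    (hW : ∀ n : ℤ, W (e (2 * n)) = e n ∧ W (e (2 * n + 1)) = 0)
    -- the operator `K : H² → L²`: `K e_{2n} = e n`, `K e_{2n+1} = e_{-n-1}` for all `n ≥ 0`
    (K : H2 →L[ℂ] L2)
    (hK : ∀ n : ℕ, K (eH (2 * n)) = e (n : ℤ) ∧ K (eH (2 * n + 1)) = e (-(n : ℤ) - 1))
    -- `φ ∈ L^∞`, encoded by its Fourier coefficients `a` and multiplication operator `M = M_φ`
    (a : ℤ → ℂ) (M : L2 →L[ℂ] L2)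
    (hM : ∀ i j : ℤ, ⟪e i, M (e j)⟫ = a (i - j))
    (b : ℤ → ℂ) (N : L2 →L[ℂ] L2)
    (hN : ∀ i j : ℤ, ⟪e i, N (e j)⟫ = b (i - j))
    -- a single operator `V` which is both `V_φ` and `V_ψ`, i.e. `V_φ = V_ψ`
    (V : H2 →L[ℂ] H2)
    (hV : ∀ f : H2, (V f : L2) = W ↑(Submodule.orthogonalProjectionOnto H2 (M (K f))))
    (hV' : ∀ f : H2, (V f : L2) = W ↑(Submodule.orthogonalProjectionOnto H2 (N (K f)))) :
    a = b ∧ M = N := by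
  have hK_even n := (hK n).1
  have hab : a = b := funext fun m => by
    obtain ⟨i, n, rfl⟩ := Int.exists_two_mul_natCast_sub_natCast m
    rw [← inner_slantHToeplitz_two_mul heH hW hK_even hM hV,
      inner_slantHToeplitz_two_mul heH hW hK_even hN hV']
  exact ⟨hab, e.clm_ext_inner fun i j => by rw [hM, hN, hab]⟩

/-- The map `φ ↦ V_φ` is injective: if `V_φ = V_ψ` then `φ = ψ`
(equivalently, all Fourier coefficients agree and `M_φ = M_ψ`). -/
theorem slantHToeplitz_injective
    {L2 : Type*} [NormedAddCommGroup L2] [InnerProductSpace ℂ L2] [CompleteSpace L2]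
    -- the orthonormal (Fourier) basis `e n ↔ zⁿ` of `L²(𝕋)`
    (e : HilbertBasis ℤ ℂ L2)
    -- the Hardy space `H²`, the closed linear span of `{e n : n ≥ 0}`
    (H2 : Submodule ℂ L2) [CompleteSpace H2]
    (hH2 : H2 = (Submodule.span ℂ (Set.range fun n : ℕ => e (n : ℤ))).topologicalClosure)
    (eH : ℕ → H2) (heH : ∀ n : ℕ, (eH n : L2) = e (n : ℤ))
    -- the operator `W`: `W e_{2n} = e n`, `W e_{2n+1} = 0` for all `n ∈ ℤ`
    (W : L2 →L[ℂ] L2)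
    (hW : ∀ n : ℤ, W (e (2 * n)) = e n ∧ W (e (2 * n + 1)) = 0)
    -- the operator `K : H² → L²`: `K e_{2n} = e n`, `K e_{2n+1} = e_{-n-1}` for all `n ≥ 0`
    (K : H2 →L[ℂ] L2)
    (hK : ∀ n : ℕ, K (eH (2 * n)) = e (n : ℤ) ∧ K (eH (2 * n + 1)) = e (-(n : ℤ) - 1))
    -- `φ ∈ L^∞`, encoded by its Fourier coefficients `a` and multiplication operator `M = M_φ`
    (a : ℤ → ℂ) (M : L2 →L[ℂ] L2)
    (hM : ∀ i j : ℤ, ⟪e i, M (e j)⟫ = a (i - j))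
    (b : ℤ → ℂ) (N : L2 →L[ℂ] L2)
    (hN : ∀ i j : ℤ, ⟪e i, N (e j)⟫ = b (i - j))
    -- a single operator `V` which is both `V_φ` and `V_ψ`, i.e. `V_φ = V_ψ`
    (V : H2 →L[ℂ] H2)
    (hV : ∀ f : H2, (V f : L2) = W ↑(Submodule.orthogonalProjectionOnto H2 (M (K f))))
    (hV' : ∀ f : H2, (V f : L2) = W ↑(Submodule.orthogonalProjectionOnto H2 (N (K f)))) :
    a = b ∧ M = N :=
  slantHToeplitz_injective_general e H2 eH heH W hW K hK a M hM b N hN V hV hV'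
end

section
/- For every φ ∈ L^∞(𝕋) and every integer n ≥ 0, V_φ e_{2n} = B_φ e_n and V_φ e_{2n+1} = L_φ e_n; that is, on even basis vectors V_φ acts as the slant Toeplitz operator and on odd basis vectors as the slant Hankel operator. -/
/-!
`W` commutes with the Riesz projection `P`: `H²` is invariant under `W`
(`W e_{2n} = e_n`, `W e_{2n+1} = 0`) and under `W*` (`W* e_n = e_{2n}`), so both `H²` and
`(H²)ᗮ` are `W`-invariant. Hence `V_φ e_{2n} = W P M_φ e_n = P W M_φ e_n = B_φ e_n`, while the
odd case is immediate from `K e_{2n+1} = e_{-n-1} = J e_n`.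
-/

open scoped ComplexInnerProductSpace
open ContinuousLinearMap Module.End Submodule

section InvariantSubspace

variable {𝕜 E : Type*} [RCLike 𝕜] [NormedAddCommGroup E] [InnerProductSpace 𝕜 E]

theorem Submodule.topologicalClosure_span_mem_invtSubmodule {T : E →L[𝕜] E} {s : Set E}
    (h : ∀ x ∈ s, T x ∈ (span 𝕜 s).topologicalClosure) :
    (span 𝕜 s).topologicalClosure ∈ invtSubmodule (T : E →ₗ[𝕜] E) :=
  topologicalClosure_minimal _ (span_le.mpr h)
    ((isClosed_topologicalClosure _).preimage T.continuous)

theorem Submodule.commute_starProjection [CompleteSpace E] {U : Submodule 𝕜 E}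
    [U.HasOrthogonalProjection] {T : E →L[𝕜] E} (hT : U ∈ invtSubmodule (T : E →ₗ[𝕜] E))
    (hT' : U ∈ invtSubmodule (T.adjoint : E →ₗ[𝕜] E)) : Commute U.starProjection T := by
  rw [U.isIdempotentElem_starProjection.commute_iff, range_starProjection, ker_starProjection]
  exact ⟨hT, ContinuousLinearMap.mem_invtSubmodule_adjoint_iff.mp hT'⟩

end InvariantSubspace

section Decimation

variable {𝕜 E : Type*} [RCLike 𝕜] [NormedAddCommGroup E] [InnerProductSpace 𝕜 E]
  (e : HilbertBasis ℤ 𝕜 E) {W : E →L[𝕜] E}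
  (hW : ∀ n : ℤ, W (e (2 * n)) = e n ∧ W (e (2 * n + 1)) = 0)
include hW

theorem adjoint_apply_eq_of_decimation [CompleteSpace E] (m : ℤ) :
    W.adjoint (e m) = e (2 * m) := by
  classical
  have horth := orthonormal_iff_ite.mp e.orthonormal
  apply e.repr.injective
  ext i
  rw [e.repr_apply_apply, e.repr_apply_apply, adjoint_inner_right, horth]
  obtain ⟨k, rfl | rfl⟩ := Int.even_or_odd' i
  · rw [(hW k).1, horth]
    simp only [mul_right_inj' (two_ne_zero' ℤ)]
  · rw [(hW k).2, inner_zero_left, if_neg (by omega)]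

variable {H : Submodule 𝕜 E}
  (hH : H = (span 𝕜 (Set.range fun n : ℕ => e (n : ℤ))).topologicalClosure)
include hH

theorem mem_invtSubmodule_of_decimation :
    H ∈ invtSubmodule (W : E →ₗ[𝕜] E) := by
  subst hH
  refine topologicalClosure_span_mem_invtSubmodule ?_
  rintro - ⟨n, rfl⟩
  obtain ⟨k, rfl | rfl⟩ := Nat.even_or_odd' n
  · simp only [Nat.cast_mul, Nat.cast_two, (hW k).1]
    exact le_topologicalClosure _ (subset_span ⟨k, rfl⟩)
  · simp only [Nat.cast_add, Nat.cast_mul, Nat.cast_two, Nat.cast_one, (hW k).2]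
    exact zero_mem _

theorem mem_invtSubmodule_adjoint_of_decimation [CompleteSpace E] :
    H ∈ invtSubmodule (W.adjoint : E →ₗ[𝕜] E) := by
  subst hH
  refine topologicalClosure_span_mem_invtSubmodule ?_
  rintro - ⟨n, rfl⟩
  rw [adjoint_apply_eq_of_decimation e hW]
  exact le_topologicalClosure _ (subset_span ⟨2 * n, by push_cast; rfl⟩)

theorem commute_starProjection_of_decimation [CompleteSpace E] [H.HasOrthogonalProjection] :
    Commute H.starProjection W :=
  commute_starProjection (mem_invtSubmodule_of_decimation e hW hH)
    (mem_invtSubmodule_adjoint_of_decimation e hW hH)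

end Decimation

theorem slantHToeplitz_even_odd_action_general
    {L2 : Type*} [NormedAddCommGroup L2] [InnerProductSpace ℂ L2] [CompleteSpace L2]
    -- the orthonormal (Fourier) basis `e n ↔ zⁿ` of `L²(𝕋)`
    (e : HilbertBasis ℤ ℂ L2)
    -- the Hardy space `H²`, the closed linear span of `{e n : n ≥ 0}`
    (H2 : Submodule ℂ L2) [CompleteSpace H2]
    (hH2 : H2 = (Submodule.span ℂ (Set.range fun n : ℕ => e (n : ℤ))).topologicalClosure)
    (eH : ℕ → H2) (heH : ∀ n : ℕ, (eH n : L2) = e (n : ℤ))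
    -- the operator `W`: `W e_{2n} = e n`, `W e_{2n+1} = 0` for all `n ∈ ℤ`
    (W : L2 →L[ℂ] L2)
    (hW : ∀ n : ℤ, W (e (2 * n)) = e n ∧ W (e (2 * n + 1)) = 0)
    -- the operator `K : H² → L²`: `K e_{2n} = e n`, `K e_{2n+1} = e_{-n-1}` for all `n ≥ 0`
    (K : H2 →L[ℂ] L2)
    (hK : ∀ n : ℕ, K (eH (2 * n)) = e (n : ℤ) ∧ K (eH (2 * n + 1)) = e (-(n : ℤ) - 1))
    -- `φ ∈ L^∞`, encoded by its Fourier coefficients `a` and multiplication operator `M = M_φ`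
    (M : L2 →L[ℂ] L2)
    -- the slant H-Toeplitz operator `V_φ = W P M_φ K : H² → H²`
    (V : H2 →L[ℂ] H2)
    (hV : ∀ f : H2, (V f : L2) = W ↑(Submodule.orthogonalProjectionOnto H2 (M (K f))))
    -- the flip operator `J : H² → L²`, `J e_n = e_{-n-1}`
    (J : H2 →L[ℂ] L2) (hJ : ∀ n : ℕ, J (eH n) = e (-(n : ℤ) - 1))
    -- the slant Toeplitz operator `B_φ = P W M_φ|_{H²}`
    (B : H2 →L[ℂ] H2)
    (hB : ∀ f : H2, B f = Submodule.orthogonalProjectionOnto H2 (W (M (f : L2))))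
    -- the slant Hankel operator `L_φ = W H_φ`, where `H_φ = P M_φ J`
    (L : H2 →L[ℂ] H2)
    (hL : ∀ f : H2, (L f : L2) = W ↑(Submodule.orthogonalProjectionOnto H2 (M (J f)))) :
    ∀ n : ℕ, V (eH (2 * n)) = B (eH n) ∧ V (eH (2 * n + 1)) = L (eH n) := by
  have hPW := commute_starProjection_of_decimation e hW hH2
  refine fun n => ⟨Subtype.ext ?_, Subtype.ext ?_⟩
  · rw [hV, (hK n).1, hB, ← heH n]
    exact (congr($hPW (M (eH n)))).symm
  · rw [hV, (hK n).2, hL, hJ]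

/-- For every `n ≥ 0`, `V_φ e_{2n} = B_φ e_n` and `V_φ e_{2n+1} = L_φ e_n`,
where `B_φ = P W M_φ|_{H²}` is the slant Toeplitz operator and `L_φ = W H_φ = W P M_φ J` is
the slant Hankel operator. -/
theorem slantHToeplitz_even_odd_action
    {L2 : Type*} [NormedAddCommGroup L2] [InnerProductSpace ℂ L2] [CompleteSpace L2]
    -- the orthonormal (Fourier) basis `e n ↔ zⁿ` of `L²(𝕋)`
    (e : HilbertBasis ℤ ℂ L2)
    -- the Hardy space `H²`, the closed linear span of `{e n : n ≥ 0}`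
    (H2 : Submodule ℂ L2) [CompleteSpace H2]
    (hH2 : H2 = (Submodule.span ℂ (Set.range fun n : ℕ => e (n : ℤ))).topologicalClosure)
    (eH : ℕ → H2) (heH : ∀ n : ℕ, (eH n : L2) = e (n : ℤ))
    -- the operator `W`: `W e_{2n} = e n`, `W e_{2n+1} = 0` for all `n ∈ ℤ`
    (W : L2 →L[ℂ] L2)
    (hW : ∀ n : ℤ, W (e (2 * n)) = e n ∧ W (e (2 * n + 1)) = 0)
    -- the operator `K : H² → L²`: `K e_{2n} = e n`, `K e_{2n+1} = e_{-n-1}` for all `n ≥ 0`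
    (K : H2 →L[ℂ] L2)
    (hK : ∀ n : ℕ, K (eH (2 * n)) = e (n : ℤ) ∧ K (eH (2 * n + 1)) = e (-(n : ℤ) - 1))
    -- `φ ∈ L^∞`, encoded by its Fourier coefficients `a` and multiplication operator `M = M_φ`
    (a : ℤ → ℂ) (M : L2 →L[ℂ] L2)
    (hM : ∀ i j : ℤ, ⟪e i, M (e j)⟫ = a (i - j))
    -- the slant H-Toeplitz operator `V_φ = W P M_φ K : H² → H²`
    (V : H2 →L[ℂ] H2)
    (hV : ∀ f : H2, (V f : L2) = W ↑(Submodule.orthogonalProjectionOnto H2 (M (K f))))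
    -- the flip operator `J : H² → L²`, `J e_n = e_{-n-1}`
    (J : H2 →L[ℂ] L2) (hJ : ∀ n : ℕ, J (eH n) = e (-(n : ℤ) - 1))
    -- the slant Toeplitz operator `B_φ = P W M_φ|_{H²}`
    (B : H2 →L[ℂ] H2)
    (hB : ∀ f : H2, B f = Submodule.orthogonalProjectionOnto H2 (W (M (f : L2))))
    -- the slant Hankel operator `L_φ = W H_φ`, where `H_φ = P M_φ J`
    (L : H2 →L[ℂ] H2)
    (hL : ∀ f : H2, (L f : L2) = W ↑(Submodule.orthogonalProjectionOnto H2 (M (J f)))) :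
    ∀ n : ℕ, V (eH (2 * n)) = B (eH n) ∧ V (eH (2 * n + 1)) = L (eH n) :=
  slantHToeplitz_even_odd_action_general e H2 hH2 eH heH W hW K hK M V hV J hJ B hB L hL
end

section
/- For φ ∈ L^∞(𝕋) and all integers i, n ≥ 0: ⟨V_φ e_{2n}, e_i⟩ = φ̂(2i − n) and ⟨V_φ e_{2n+1}, e_i⟩ = φ̂(2i + n + 1). Consequently, the matrix (⟨V_φ e_j, e_i⟩)_{i,j≥0} of V_φ with respect to the basis {e_n}_{n≥0} is a slant H-Toeplitz matrix. -/
/- Since `W* e_i = e_{2i}` and `e_{2i} ∈ H²`, the projection drops out of `⟨V_φ f, e_i⟩`, which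
becomes `⟨M_φ K f, e_{2i}⟩`; on `K e_{2n} = e_n` and `K e_{2n+1} = e_{-n-1}` this is `φ̂(2i - n)` and
`φ̂(2i + n + 1)`. The slant H-Toeplitz relations are then identities between these indices.

Modelling: `L2` is a Hilbert space with Hilbert basis `(e n)_{n ∈ ℤ}` standing for `L²(𝕋)` with
`e n = zⁿ`, and `H2 ⊆ L2` carries the basis `eH n = e n`, `n ≥ 0`. The symbol `φ ∈ L^∞(𝕋)` enters
only through its multiplication operator `M = M_φ`, whose matrix is `⟪e i, M (e j)⟫ = φ̂(i - j)`.
The paper's `⟨f, g⟩ = ∫ f ḡ` is Mathlib's `⟪g, f⟫`, so its matrix entry `⟨A e_j, e_i⟩` is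
`⟪e i, A (e j)⟫` here. -/

open scoped ComplexInnerProductSpace

/-- A doubly infinite matrix `(A i j)`, `i, j ≥ 0`, is a *slant H-Toeplitz matrix* if
`a_{k,0} = a_{k+j,4j}` for all `j ≥ 0`, `k ≥ 0`; `a_{k,0} = a_{k-j,4j-1}` for all `j ≥ 1` and
`k` with `k - j ≥ 0`; and `a_{0,2k} = a_{i,2k+4i}` for all `i ≥ 1`, `k ≥ 1`. -/
def IsSlantHToeplitzMatrix (A : ℕ → ℕ → ℂ) : Prop :=
  (∀ k j : ℕ, A k 0 = A (k + j) (4 * j)) ∧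
  (∀ k j : ℕ, 1 ≤ j → j ≤ k → A k 0 = A (k - j) (4 * j - 1)) ∧
  (∀ i k : ℕ, 1 ≤ i → 1 ≤ k → A 0 (2 * k) = A i (2 * k + 4 * i))

theorem HilbertBasis.ext_continuousLinearMap {ι 𝕜 E F : Type*} [RCLike 𝕜]
    [NormedAddCommGroup E] [InnerProductSpace 𝕜 E] [TopologicalSpace F] [AddCommMonoid F]
    [Module 𝕜 F] [T2Space F] (b : HilbertBasis ι 𝕜 E) {f g : E →L[𝕜] F}
    (h : ∀ i, f (b i) = g (b i)) : f = g :=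
  ContinuousLinearMap.ext_on (Submodule.dense_iff_topologicalClosure_eq_top.mpr b.dense_span)
    (by rintro _ ⟨i, rfl⟩; exact h i)

theorem HilbertBasis.inner_apply_eq_of_forall {ι 𝕜 E F : Type*} [RCLike 𝕜]
    [NormedAddCommGroup E] [InnerProductSpace 𝕜 E] [NormedAddCommGroup F] [InnerProductSpace 𝕜 F]
    (b : HilbertBasis ι 𝕜 E) (T : E →L[𝕜] F) {x : F} {y : E}
    (h : ∀ i, inner 𝕜 x (T (b i)) = inner 𝕜 y (b i)) (z : E) :
    inner 𝕜 x (T z) = inner 𝕜 y z := by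
  have hcomp : (innerSL 𝕜 x).comp T = innerSL 𝕜 y := b.ext_continuousLinearMap h
  simpa using congrArg (· z) hcomp

section SlantHToeplitz

variable {L2 : Type*} [NormedAddCommGroup L2] [InnerProductSpace ℂ L2] (e : HilbertBasis ℤ ℂ L2)

theorem inner_basis_apply_of_decimation {W : L2 →L[ℂ] L2}
    (hW : ∀ n : ℤ, W (e (2 * n)) = e n ∧ W (e (2 * n + 1)) = 0) (i : ℤ) (z : L2) :
    ⟪e i, W z⟫ = ⟪e (2 * i), z⟫ := by
  refine e.inner_apply_eq_of_forall W (fun m => ?_) z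
  rw [orthonormal_iff_ite.mp e.orthonormal]
  obtain ⟨n, rfl | rfl⟩ := Int.even_or_odd' m
  · rw [(hW n).1, orthonormal_iff_ite.mp e.orthonormal]
    simp only [mul_right_inj' (two_ne_zero (α := ℤ))]
  · rw [(hW n).2, inner_zero_right, if_neg (by omega)]

theorem inner_basis_apply_orthogonalProjection_of_decimation {W : L2 →L[ℂ] L2}
    (hW : ∀ n : ℤ, W (e (2 * n)) = e n ∧ W (e (2 * n + 1)) = 0)
    (H2 : Submodule ℂ L2) [H2.HasOrthogonalProjection] {i : ℤ} (hi : e (2 * i) ∈ H2) (x : L2) :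
    ⟪e i, W (H2.orthogonalProjectionOnto x)⟫ = ⟪e (2 * i), x⟫ := by
  rw [inner_basis_apply_of_decimation e hW]
  exact H2.inner_orthogonalProjectionOnto_eq_of_mem_left ⟨_, hi⟩ x

end SlantHToeplitz

theorem isSlantHToeplitzMatrix_of_entries {A : ℕ → ℕ → ℂ} {a : ℤ → ℂ}
    (h : ∀ i n : ℕ, A i (2 * n) = a (2 * (i : ℤ) - (n : ℤ)) ∧
      A i (2 * n + 1) = a (2 * (i : ℤ) + (n : ℤ) + 1)) :
    IsSlantHToeplitzMatrix A := by
  refine ⟨fun k j => ?_, fun k j hj hjk => ?_, fun i k _ _ => ?_⟩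
  · rw [show 4 * j = 2 * (2 * j) by ring, ← mul_zero 2, (h k 0).1, (h _ _).1]
    push_cast; ring_nf
  · rw [show 4 * j - 1 = 2 * (2 * j - 1) + 1 by omega, ← mul_zero 2, (h k 0).1, (h _ _).2]
    congr 1; push_cast [hjk, Nat.one_le_iff_ne_zero.mp hj, show 1 ≤ 2 * j by omega]; ring
  · rw [show 2 * k + 4 * i = 2 * (k + 2 * i) by ring, (h 0 k).1, (h i _).1]
    push_cast; ring_nf

theorem slantHToeplitz_matrix_entries_general
    {L2 : Type*} [NormedAddCommGroup L2] [InnerProductSpace ℂ L2]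
    -- the orthonormal (Fourier) basis `e n ↔ zⁿ` of `L²(𝕋)`
    (e : HilbertBasis ℤ ℂ L2)
    -- the Hardy space `H²`, the closed linear span of `{e n : n ≥ 0}`
    (H2 : Submodule ℂ L2) [CompleteSpace H2]
    (eH : ℕ → H2) (heH : ∀ n : ℕ, (eH n : L2) = e (n : ℤ))
    -- the operator `W`: `W e_{2n} = e n`, `W e_{2n+1} = 0` for all `n ∈ ℤ`
    (W : L2 →L[ℂ] L2)
    (hW : ∀ n : ℤ, W (e (2 * n)) = e n ∧ W (e (2 * n + 1)) = 0)
    -- the operator `K : H² → L²`: `K e_{2n} = e n`, `K e_{2n+1} = e_{-n-1}` for all `n ≥ 0`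
    (K : H2 →L[ℂ] L2)
    (hK : ∀ n : ℕ, K (eH (2 * n)) = e (n : ℤ) ∧ K (eH (2 * n + 1)) = e (-(n : ℤ) - 1))
    -- `φ ∈ L^∞`, encoded by its Fourier coefficients `a` and multiplication operator `M = M_φ`
    (a : ℤ → ℂ) (M : L2 →L[ℂ] L2)
    (hM : ∀ i j : ℤ, ⟪e i, M (e j)⟫ = a (i - j))
    -- the slant H-Toeplitz operator `V_φ = W P M_φ K : H² → H²`
    (V : H2 →L[ℂ] H2)
    (hV : ∀ f : H2, (V f : L2) = W ↑(Submodule.orthogonalProjectionOnto H2 (M (K f))))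
 :
    (∀ i n : ℕ, ⟪eH i, V (eH (2 * n))⟫ = a (2 * (i : ℤ) - (n : ℤ)) ∧
      ⟪eH i, V (eH (2 * n + 1))⟫ = a (2 * (i : ℤ) + (n : ℤ) + 1)) ∧
    IsSlantHToeplitzMatrix (fun i j : ℕ => ⟪eH i, V (eH j)⟫) := by
  have hentry (i : ℕ) (f : H2) : ⟪eH i, V f⟫ = ⟪e (2 * (i : ℤ)), M (K f)⟫ := by
    have hmem : e (2 * (i : ℤ)) ∈ H2 := by exact_mod_cast heH (2 * i) ▸ (eH (2 * i)).2
    rw [Submodule.coe_inner, hV, heH,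
      inner_basis_apply_orthogonalProjection_of_decimation e hW H2 hmem]
  have hentries (i n : ℕ) : ⟪eH i, V (eH (2 * n))⟫ = a (2 * (i : ℤ) - (n : ℤ)) ∧
      ⟪eH i, V (eH (2 * n + 1))⟫ = a (2 * (i : ℤ) + (n : ℤ) + 1) := by
    rw [hentry, hentry, (hK n).1, (hK n).2, hM, hM]
    exact ⟨rfl, by ring_nf⟩
  exact ⟨hentries, isSlantHToeplitzMatrix_of_entries hentries⟩

/-- `⟨V_φ e_{2n}, e_i⟩ = φ̂(2i - n)` and `⟨V_φ e_{2n+1}, e_i⟩ = φ̂(2i + n + 1)`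
for all `i, n ≥ 0`; consequently the matrix of `V_φ` is a slant H-Toeplitz matrix. -/
theorem slantHToeplitz_matrix_entries
    {L2 : Type*} [NormedAddCommGroup L2] [InnerProductSpace ℂ L2] [CompleteSpace L2]
    -- the orthonormal (Fourier) basis `e n ↔ zⁿ` of `L²(𝕋)`
    (e : HilbertBasis ℤ ℂ L2)
    -- the Hardy space `H²`, the closed linear span of `{e n : n ≥ 0}`
    (H2 : Submodule ℂ L2) [CompleteSpace H2]
    (hH2 : H2 = (Submodule.span ℂ (Set.range fun n : ℕ => e (n : ℤ))).topologicalClosure)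
    (eH : ℕ → H2) (heH : ∀ n : ℕ, (eH n : L2) = e (n : ℤ))
    -- the operator `W`: `W e_{2n} = e n`, `W e_{2n+1} = 0` for all `n ∈ ℤ`
    (W : L2 →L[ℂ] L2)
    (hW : ∀ n : ℤ, W (e (2 * n)) = e n ∧ W (e (2 * n + 1)) = 0)
    -- the operator `K : H² → L²`: `K e_{2n} = e n`, `K e_{2n+1} = e_{-n-1}` for all `n ≥ 0`
    (K : H2 →L[ℂ] L2)
    (hK : ∀ n : ℕ, K (eH (2 * n)) = e (n : ℤ) ∧ K (eH (2 * n + 1)) = e (-(n : ℤ) - 1))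
    -- `φ ∈ L^∞`, encoded by its Fourier coefficients `a` and multiplication operator `M = M_φ`
    (a : ℤ → ℂ) (M : L2 →L[ℂ] L2)
    (hM : ∀ i j : ℤ, ⟪e i, M (e j)⟫ = a (i - j))
    -- the slant H-Toeplitz operator `V_φ = W P M_φ K : H² → H²`
    (V : H2 →L[ℂ] H2)
    (hV : ∀ f : H2, (V f : L2) = W ↑(Submodule.orthogonalProjectionOnto H2 (M (K f))))
 :
    (∀ i n : ℕ, ⟪eH i, V (eH (2 * n))⟫ = a (2 * (i : ℤ) - (n : ℤ)) ∧
      ⟪eH i, V (eH (2 * n + 1))⟫ = a (2 * (i : ℤ) + (n : ℤ) + 1)) ∧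
    IsSlantHToeplitzMatrix (fun i j : ℕ => ⟪eH i, V (eH j)⟫) :=
  slantHToeplitz_matrix_entries_general e H2 eH heH W hW K hK a M hM V hV
end

section
/- For φ ∈ L^∞(𝕋), the slant H-Toeplitz operator V_φ is hyponormal, i.e. ‖V_φ* f‖ ≤ ‖V_φ f‖ for all f ∈ H², if and only if φ = 0. -/
/-!
Write `κ : ℕ ≃ ℤ` for the index map of `K` (`2k ↦ k`, `2k + 1 ↦ -k - 1`). The matrix of `V_φ` is
`⟨V_φ e_j, e_m⟩ = φ̂(2m - κ j)`. A row runs through all Fourier coefficients, so Bessel's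
inequality gives `‖V_φ* e_n‖² ≥ ∑ₜ |φ̂(t)|²`, while a column only sees `‖V_φ e_n‖² = ∑_{m ≥ 0}
|φ̂(2m - κ n)|²`. Hyponormality at `e_n` therefore kills every coefficient outside
`{2m - κ n : m ≥ 0}`: at `e_0` all odd ones, at `e_1` all even ones.
-/

open scoped ComplexInnerProductSpace InnerProductSpace
open Function

theorem eq_zero_of_tsum_le_hasSum_comp {α β : Type*} {f : β → ℝ} (hf : 0 ≤ f) (hfs : Summable f)
    {g : α → β} (hg : Injective g) {s : ℝ} (hfg : HasSum (f ∘ g) s) (hle : ∑' b, f b ≤ s)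
    {b : β} (hb : b ∉ Set.range g) : f b = 0 := by
  have hind : HasSum ((Set.range g).indicator f) s :=
    hasSum_subtype_iff_indicator.1 (hg.hasSum_range_iff.2 hfg)
  by_contra hne
  have hpos : 0 < f b := lt_of_le_of_ne (hf b) (Ne.symm hne)
  have := hasSum_lt (i := b) (Set.indicator_le_self' fun x _ => hf x)
    (by rwa [Set.indicator_of_notMem hb]) hind hfs.hasSum
  linarith

theorem Equiv.intEquivNat_symm_two_mul (k : ℕ) : Equiv.intEquivNat.symm (2 * k) = k := by
  rw [Equiv.symm_apply_eq]
  rfl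

theorem Equiv.intEquivNat_symm_two_mul_add_one (k : ℕ) :
    Equiv.intEquivNat.symm (2 * k + 1) = -(k : ℤ) - 1 := by
  rw [Equiv.symm_apply_eq, show -(k : ℤ) - 1 = Int.negSucc k by omega]
  rfl

section InnerProductSpace

variable {ι 𝕜 E : Type*} [RCLike 𝕜] [NormedAddCommGroup E] [InnerProductSpace 𝕜 E]

theorem Orthonormal.inner_eq_zero_of_mem_closure_span {κ : Type*} {v : ι → E}
    (hv : Orthonormal 𝕜 v) {f : κ → ι} {i : ι} (hi : i ∉ Set.range f) {x : E}
    (hx : x ∈ (Submodule.span 𝕜 (Set.range (v ∘ f))).topologicalClosure) : ⟪v i, x⟫_𝕜 = 0 := by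
  have hspan : Submodule.span 𝕜 (Set.range (v ∘ f)) ≤ (𝕜 ∙ v i)ᗮ := by
    refine Submodule.span_le.2 ?_
    rintro _ ⟨k, rfl⟩
    exact Submodule.mem_orthogonal_singleton_iff_inner_right.2
      (hv.inner_eq_zero fun h => hi ⟨k, h.symm⟩)
  exact Submodule.mem_orthogonal_singleton_iff_inner_right.1
    (Submodule.topologicalClosure_minimal _ hspan (Submodule.isClosed_orthogonal _) hx)

namespace HilbertBasis

variable (b : HilbertBasis ι 𝕜 E)

theorem hasSum_norm_inner_sq (x : E) : HasSum (fun i => ‖⟪b i, x⟫_𝕜‖ ^ 2) (‖x‖ ^ 2) := by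
  have h := b.hasSum_inner_mul_inner x x
  have hterm : (fun i => ⟪x, b i⟫_𝕜 * ⟪b i, x⟫_𝕜) = fun i => ((‖⟪b i, x⟫_𝕜‖ ^ 2 : ℝ) : 𝕜) :=
    funext fun i => by rw [← inner_conj_symm, RCLike.conj_mul]; norm_cast
  rw [hterm, inner_self_eq_norm_sq_to_K] at h
  exact_mod_cast h

theorem eq_of_forall_inner_eq {x y : E} (h : ∀ i, ⟪b i, x⟫_𝕜 = ⟪b i, y⟫_𝕜) : x = y :=
  b.repr.injective <| lp.ext <| funext fun i => by simp only [b.repr_apply_apply, h]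

theorem continuousLinearMap_eq_zero {T : E →L[𝕜] E} (h : ∀ i j, ⟪b i, T (b j)⟫_𝕜 = 0) :
    T = 0 := by
  refine ContinuousLinearMap.ext_on
    (Submodule.dense_iff_topologicalClosure_eq_top.2 b.dense_span) ?_
  rintro _ ⟨j, rfl⟩
  exact b.eq_of_forall_inner_eq fun i => by simp [h i j]

end HilbertBasis

end InnerProductSpace

section SlantHToeplitz

variable {L2 : Type*} [NormedAddCommGroup L2] [InnerProductSpace ℂ L2]
  {e : HilbertBasis ℤ ℂ L2} {H2 : Submodule ℂ L2}

theorem inner_basis_eq_zero_of_neg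
    (hH2 : H2 = (Submodule.span ℂ (Set.range fun n : ℕ => e (n : ℤ))).topologicalClosure)
    {x : L2} (hx : x ∈ H2) {i : ℤ} (hi : i < 0) : ⟪e i, x⟫ = 0 :=
  e.orthonormal.inner_eq_zero_of_mem_closure_span (f := Nat.cast) (by rintro ⟨m, rfl⟩; omega)
    (hH2 ▸ hx)

theorem apply_eq_basis_intEquivNat_symm {eH : ℕ → H2} {K : H2 →L[ℂ] L2}
    (hK : ∀ n : ℕ, K (eH (2 * n)) = e (n : ℤ) ∧ K (eH (2 * n + 1)) = e (-(n : ℤ) - 1)) (j : ℕ) :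
    K (eH j) = e (Equiv.intEquivNat.symm j) := by
  obtain ⟨k, rfl | rfl⟩ := Nat.even_or_odd' j
  · rw [(hK k).1, Equiv.intEquivNat_symm_two_mul]
  · rw [(hK k).2, Equiv.intEquivNat_symm_two_mul_add_one]

theorem orthonormal_of_coe_eq_basis {eH : ℕ → H2} (heH : ∀ n : ℕ, (eH n : L2) = e (n : ℤ)) :
    Orthonormal ℂ eH := by
  rw [← H2.subtypeₗᵢ.orthonormal_comp_iff]
  convert e.orthonormal.comp _ Nat.cast_injective
  exact funext heH

theorem summable_norm_sq_of_inner_basis_eq {a : ℤ → ℂ} {M : L2 →L[ℂ] L2}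
    (hM : ∀ i j : ℤ, ⟪e i, M (e j)⟫ = a (i - j)) : Summable fun t => ‖a t‖ ^ 2 :=
  (e.hasSum_norm_inner_sq (M (e 0))).summable.congr fun t => by rw [hM, sub_zero]

variable [CompleteSpace H2]

theorem eq_zero_of_coeff_eq_zero {W : L2 →L[ℂ] L2} {K : H2 →L[ℂ] L2} {a : ℤ → ℂ}
    {M : L2 →L[ℂ] L2} (hM : ∀ i j : ℤ, ⟪e i, M (e j)⟫ = a (i - j)) {V : H2 →L[ℂ] H2}
    (hV : ∀ f : H2, (V f : L2) = W ↑(Submodule.orthogonalProjectionOnto H2 (M (K f))))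
    (ha : a = 0) : V = 0 := by
  have hM0 : M = 0 := e.continuousLinearMap_eq_zero fun i j => by rw [hM, ha]; rfl
  ext f
  simp [hV, hM0]

variable [CompleteSpace L2]

theorem adjoint_apply_basis_eq_two_mul {W : L2 →L[ℂ] L2}
    (hW : ∀ n : ℤ, W (e (2 * n)) = e n ∧ W (e (2 * n + 1)) = 0) (i : ℤ) :
    W.adjoint (e i) = e (2 * i) := by
  refine e.eq_of_forall_inner_eq fun j => ?_
  have he := orthonormal_iff_ite.1 e.orthonormal
  rw [ContinuousLinearMap.adjoint_inner_right]
  obtain ⟨k, rfl | rfl⟩ := Int.even_or_odd' j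
  · rw [(hW k).1, he, he]
    exact if_congr (by omega) rfl rfl
  · rw [(hW k).2, inner_zero_left, he, if_neg (by omega)]

theorem inner_basis_natCast_apply_orthogonalProjection
    (hH2 : H2 = (Submodule.span ℂ (Set.range fun n : ℕ => e (n : ℤ))).topologicalClosure)
    {W : L2 →L[ℂ] L2} (hW : ∀ n : ℤ, W (e (2 * n)) = e n ∧ W (e (2 * n + 1)) = 0)
    (m : ℕ) (y : L2) :
    ⟪e m, W (H2.orthogonalProjectionOnto y)⟫ = ⟪e (2 * m), y⟫ := by
  have hmem : e (2 * m) ∈ H2 := by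
    rw [hH2]
    exact Submodule.le_topologicalClosure _ (Submodule.subset_span ⟨2 * m, by push_cast; rfl⟩)
  rw [← ContinuousLinearMap.adjoint_inner_left, adjoint_apply_basis_eq_two_mul hW]
  exact Submodule.inner_orthogonalProjectionOnto_eq_of_mem_left ⟨_, hmem⟩ y

theorem inner_basis_apply_orthogonalProjection_of_neg
    (hH2 : H2 = (Submodule.span ℂ (Set.range fun n : ℕ => e (n : ℤ))).topologicalClosure)
    {W : L2 →L[ℂ] L2} (hW : ∀ n : ℤ, W (e (2 * n)) = e n ∧ W (e (2 * n + 1)) = 0)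
    {i : ℤ} (hi : i < 0) (y : L2) :
    ⟪e i, W (H2.orthogonalProjectionOnto y)⟫ = 0 := by
  rw [← ContinuousLinearMap.adjoint_inner_left, adjoint_apply_basis_eq_two_mul hW]
  exact inner_basis_eq_zero_of_neg hH2 (Submodule.coe_mem _) (by omega)

theorem hasSum_norm_apply_orthogonalProjection_sq
    (hH2 : H2 = (Submodule.span ℂ (Set.range fun n : ℕ => e (n : ℤ))).topologicalClosure)
    {W : L2 →L[ℂ] L2} (hW : ∀ n : ℤ, W (e (2 * n)) = e n ∧ W (e (2 * n + 1)) = 0) (y : L2) :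
    HasSum (fun m : ℕ => ‖⟪e (2 * m), y⟫‖ ^ 2) (‖W (H2.orthogonalProjectionOnto y)‖ ^ 2) := by
  have hvanish : ∀ i ∉ Set.range ((↑) : ℕ → ℤ),
      ‖⟪e i, W (H2.orthogonalProjectionOnto y)⟫‖ ^ 2 = 0 := fun i hi => by
    rw [inner_basis_apply_orthogonalProjection_of_neg hH2 hW
      (not_le.1 fun h => hi ⟨i.toNat, Int.toNat_of_nonneg h⟩), norm_zero,
      zero_pow two_ne_zero]
  refine (Nat.cast_injective.hasSum_iff hvanish).2 (e.hasSum_norm_inner_sq _) |>.congr_fun ?_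
  intro m
  simp only [comp_apply, inner_basis_natCast_apply_orthogonalProjection hH2 hW]

theorem inner_apply_eq_coeff
    (hH2 : H2 = (Submodule.span ℂ (Set.range fun n : ℕ => e (n : ℤ))).topologicalClosure)
    {eH : ℕ → H2} (heH : ∀ n : ℕ, (eH n : L2) = e (n : ℤ))
    {W : L2 →L[ℂ] L2} (hW : ∀ n : ℤ, W (e (2 * n)) = e n ∧ W (e (2 * n + 1)) = 0)
    {K : H2 →L[ℂ] L2}
    (hK : ∀ n : ℕ, K (eH (2 * n)) = e (n : ℤ) ∧ K (eH (2 * n + 1)) = e (-(n : ℤ) - 1))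
    {a : ℤ → ℂ} {M : L2 →L[ℂ] L2} (hM : ∀ i j : ℤ, ⟪e i, M (e j)⟫ = a (i - j))
    {V : H2 →L[ℂ] H2}
    (hV : ∀ f : H2, (V f : L2) = W ↑(Submodule.orthogonalProjectionOnto H2 (M (K f))))
    (m j : ℕ) : ⟪eH m, V (eH j)⟫ = a (2 * m - Equiv.intEquivNat.symm j) := by
  rw [Submodule.coe_inner, heH, hV, inner_basis_natCast_apply_orthogonalProjection hH2 hW,
    apply_eq_basis_intEquivNat_symm hK, hM]

theorem tsum_norm_sq_le_norm_adjoint_apply_sq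
    (hH2 : H2 = (Submodule.span ℂ (Set.range fun n : ℕ => e (n : ℤ))).topologicalClosure)
    {eH : ℕ → H2} (heH : ∀ n : ℕ, (eH n : L2) = e (n : ℤ))
    {W : L2 →L[ℂ] L2} (hW : ∀ n : ℤ, W (e (2 * n)) = e n ∧ W (e (2 * n + 1)) = 0)
    {K : H2 →L[ℂ] L2}
    (hK : ∀ n : ℕ, K (eH (2 * n)) = e (n : ℤ) ∧ K (eH (2 * n + 1)) = e (-(n : ℤ) - 1))
    {a : ℤ → ℂ} {M : L2 →L[ℂ] L2} (hM : ∀ i j : ℤ, ⟪e i, M (e j)⟫ = a (i - j))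
    {V : H2 →L[ℂ] H2}
    (hV : ∀ f : H2, (V f : L2) = W ↑(Submodule.orthogonalProjectionOnto H2 (M (K f))))
    (n : ℕ) : ∑' t, ‖a t‖ ^ 2 ≤ ‖V.adjoint (eH n)‖ ^ 2 := by
  let σ : ℕ ≃ ℤ := Equiv.intEquivNat.symm.trans (Equiv.subLeft (2 * n))
  calc ∑' t, ‖a t‖ ^ 2 = ∑' j, ‖a (σ j)‖ ^ 2 := (σ.tsum_eq fun t => ‖a t‖ ^ 2).symm
    _ = ∑' j, ‖⟪eH j, V.adjoint (eH n)⟫‖ ^ 2 := by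
      congr! 3 with j
      rw [ContinuousLinearMap.adjoint_inner_right, ← inner_conj_symm, RCLike.norm_conj,
        inner_apply_eq_coeff hH2 heH hW hK hM hV]
      rfl
    _ ≤ ‖V.adjoint (eH n)‖ ^ 2 := (orthonormal_of_coe_eq_basis heH).tsum_inner_products_le _

theorem hasSum_norm_coeff_sq
    (hH2 : H2 = (Submodule.span ℂ (Set.range fun n : ℕ => e (n : ℤ))).topologicalClosure)
    {W : L2 →L[ℂ] L2} (hW : ∀ n : ℤ, W (e (2 * n)) = e n ∧ W (e (2 * n + 1)) = 0)
    {K : H2 →L[ℂ] L2} {a : ℤ → ℂ} {M : L2 →L[ℂ] L2} (hM : ∀ i j : ℤ, ⟪e i, M (e j)⟫ = a (i - j))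
    {V : H2 →L[ℂ] H2}
    (hV : ∀ f : H2, (V f : L2) = W ↑(Submodule.orthogonalProjectionOnto H2 (M (K f))))
    {f : H2} {c : ℤ} (hc : K f = e c) :
    HasSum (fun m : ℕ => ‖a (2 * m - c)‖ ^ 2) (‖V f‖ ^ 2) := by
  have h := hasSum_norm_apply_orthogonalProjection_sq hH2 hW (M (e c))
  simp only [hM] at h
  show HasSum _ (‖(V f : L2)‖ ^ 2)
  rwa [hV, hc]

theorem coeff_eq_zero_of_norm_adjoint_apply_le
    (hH2 : H2 = (Submodule.span ℂ (Set.range fun n : ℕ => e (n : ℤ))).topologicalClosure)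
    {eH : ℕ → H2} (heH : ∀ n : ℕ, (eH n : L2) = e (n : ℤ))
    {W : L2 →L[ℂ] L2} (hW : ∀ n : ℤ, W (e (2 * n)) = e n ∧ W (e (2 * n + 1)) = 0)
    {K : H2 →L[ℂ] L2}
    (hK : ∀ n : ℕ, K (eH (2 * n)) = e (n : ℤ) ∧ K (eH (2 * n + 1)) = e (-(n : ℤ) - 1))
    {a : ℤ → ℂ} {M : L2 →L[ℂ] L2} (hM : ∀ i j : ℤ, ⟪e i, M (e j)⟫ = a (i - j))
    {V : H2 →L[ℂ] H2}
    (hV : ∀ f : H2, (V f : L2) = W ↑(Submodule.orthogonalProjectionOnto H2 (M (K f))))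
    {n : ℕ} (hn : ‖V.adjoint (eH n)‖ ≤ ‖V (eH n)‖) {c : ℤ} (hc : K (eH n) = e c)
    {t : ℤ} (ht : ∀ m : ℕ, 2 * (m : ℤ) - c ≠ t) : a t = 0 := by
  have hle : ∑' t, ‖a t‖ ^ 2 ≤ ‖V (eH n)‖ ^ 2 :=
    (tsum_norm_sq_le_norm_adjoint_apply_sq hH2 heH hW hK hM hV n).trans
      (pow_le_pow_left₀ (norm_nonneg _) hn 2)
  have h := eq_zero_of_tsum_le_hasSum_comp (f := fun t => ‖a t‖ ^ 2)
    (g := fun m : ℕ => 2 * (m : ℤ) - c) (fun _ => by positivity)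
    (summable_norm_sq_of_inner_basis_eq hM) (fun m₁ m₂ h => by simp only at h; omega)
    (hasSum_norm_coeff_sq hH2 hW hM hV hc) hle (by rintro ⟨m, hm⟩; exact ht m hm)
  simpa using h

end SlantHToeplitz

/-- `V_φ` is hyponormal, i.e. `‖V_φ* f‖ ≤ ‖V_φ f‖` for all `f ∈ H²`,
if and only if `φ = 0`. -/
theorem hyponormal_iff_zero
    {L2 : Type*} [NormedAddCommGroup L2] [InnerProductSpace ℂ L2] [CompleteSpace L2]
    -- the orthonormal (Fourier) basis `e n ↔ zⁿ` of `L²(𝕋)`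
    (e : HilbertBasis ℤ ℂ L2)
    -- the Hardy space `H²`, the closed linear span of `{e n : n ≥ 0}`
    (H2 : Submodule ℂ L2) [CompleteSpace H2]
    (hH2 : H2 = (Submodule.span ℂ (Set.range fun n : ℕ => e (n : ℤ))).topologicalClosure)
    (eH : ℕ → H2) (heH : ∀ n : ℕ, (eH n : L2) = e (n : ℤ))
    -- the operator `W`: `W e_{2n} = e n`, `W e_{2n+1} = 0` for all `n ∈ ℤ`
    (W : L2 →L[ℂ] L2)
    (hW : ∀ n : ℤ, W (e (2 * n)) = e n ∧ W (e (2 * n + 1)) = 0)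
    -- the operator `K : H² → L²`: `K e_{2n} = e n`, `K e_{2n+1} = e_{-n-1}` for all `n ≥ 0`
    (K : H2 →L[ℂ] L2)
    (hK : ∀ n : ℕ, K (eH (2 * n)) = e (n : ℤ) ∧ K (eH (2 * n + 1)) = e (-(n : ℤ) - 1))
    -- `φ ∈ L^∞`, encoded by its Fourier coefficients `a` and multiplication operator `M = M_φ`
    (a : ℤ → ℂ) (M : L2 →L[ℂ] L2)
    (hM : ∀ i j : ℤ, ⟪e i, M (e j)⟫ = a (i - j))
    -- the slant H-Toeplitz operator `V_φ = W P M_φ K : H² → H²`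
    (V : H2 →L[ℂ] H2)
    (hV : ∀ f : H2, (V f : L2) = W ↑(Submodule.orthogonalProjectionOnto H2 (M (K f))))
 :
    (∀ f : H2, ‖ContinuousLinearMap.adjoint V f‖ ≤ ‖V f‖) ↔ a = 0 := by
  constructor
  · intro hyp
    funext t
    obtain ⟨k, rfl | rfl⟩ := Int.even_or_odd' t
    · exact coeff_eq_zero_of_norm_adjoint_apply_le hH2 heH hW hK hM hV (hyp _) (hK 0).2
        fun m => by omega
    · exact coeff_eq_zero_of_norm_adjoint_apply_le hH2 heH hW hK hM hV (hyp _) (hK 0).1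
        fun m => by omega
  · intro ha f
    simp [eq_zero_of_coeff_eq_zero hM hV ha]
end

section
/- For φ ∈ L^∞(𝕋), if the slant H-Toeplitz operator V_φ is an isometry on H² (i.e. V_φ* V_φ = I, equivalently ‖V_φ f‖ = ‖f‖ для all f ∈ H²), then φ = 0; in particular, no nonzero slant H-Toeplitz operator is an isometry. -/
/-! Every `e_m` (`m ∈ ℤ`) is `K e_j` for some `j`. Since `W* e_k = e_{2k}`, the `k`-th Fourier
coefficient of `V_φ e_j = W P (φ e_m)` is `φ̂(2k - m)` for `k ≥ 0` and `0` for `k < 0`, so Parseval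
and `‖V_φ e_j‖ = 1` give `∑_{k ≥ 0} |φ̂(2k - m)|² = 1` for every `m`. The sums for `m = -n` and
`m = -n - 2` differ by exactly the term `|φ̂(n)|²`, which therefore vanishes. -/

open scoped ComplexInnerProductSpace

section HilbertBasis

variable {ι 𝕜 E F : Type*} [RCLike 𝕜] [NormedAddCommGroup E] [InnerProductSpace 𝕜 E]

theorem Orthonormal.mem_orthogonal_topologicalClosure_span_image {v : ι → E}
    (hv : Orthonormal 𝕜 v) {s : Set ι} {i : ι} (hi : i ∉ s) :
    v i ∈ (Submodule.span 𝕜 (v '' s)).topologicalClosureᗮ := by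
  rw [Submodule.orthogonal_closure]
  have hortho : Submodule.span 𝕜 {v i} ⟂ Submodule.span 𝕜 (v '' s) := by
    rw [Submodule.isOrtho_span]
    rintro _ rfl _ ⟨j, hj, rfl⟩
    exact hv.inner_eq_zero fun hij => hi (hij ▸ hj)
  exact hortho (Submodule.subset_span rfl)

theorem Orthonormal.inner_orthogonalProjectionOnto_eq_ite_nonneg {v : ℤ → E}
    (hv : Orthonormal 𝕜 v) (U : Submodule 𝕜 E) [U.HasOrthogonalProjection]
    (hU : U = (Submodule.span 𝕜 (Set.range fun n : ℕ => v n)).topologicalClosure) (k : ℤ) (x : E) :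
    inner 𝕜 (v k) (U.orthogonalProjectionOnto x : E) = if 0 ≤ k then inner 𝕜 (v k) x else 0 := by
  split_ifs with hk
  · have hmem : v k ∈ U := hU ▸ Submodule.le_topologicalClosure _
      (Submodule.subset_span ⟨k.toNat, congrArg v (Int.toNat_of_nonneg hk)⟩)
    exact Submodule.inner_orthogonalProjectionOnto_eq_of_mem_left ⟨v k, hmem⟩ x
  · have hperp : v k ∈ Uᗮ := by
      rw [hU, Set.range_comp' v]
      exact hv.mem_orthogonal_topologicalClosure_span_image
        fun ⟨n, hn⟩ => hk (hn ▸ Int.natCast_nonneg n)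
    exact Submodule.inner_left_of_mem_orthogonal (Submodule.coe_mem _) hperp

theorem HilbertBasis.ext [TopologicalSpace F] [AddCommMonoid F] [Module 𝕜 F] [T2Space F]
    (b : HilbertBasis ι 𝕜 E) {f g : E →L[𝕜] F} (h : ∀ i, f (b i) = g (b i)) : f = g :=
  ContinuousLinearMap.ext_on (Submodule.dense_iff_topologicalClosure_eq_top.mpr b.dense_span)
    (Set.forall_mem_range.mpr h)

theorem HilbertBasis.inner_apply_eq_inner_two_mul_s12 (b : HilbertBasis ℤ 𝕜 E) {W : E →L[𝕜] E}
    (hW : ∀ n : ℤ, W (b (2 * n)) = b n ∧ W (b (2 * n + 1)) = 0) (k : ℤ) (x : E) :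
    inner 𝕜 (b k) (W x) = inner 𝕜 (b (2 * k)) x := by
  have hb := orthonormal_iff_ite.mp b.orthonormal
  suffices (innerSL 𝕜 (b k)).comp W = innerSL 𝕜 (b (2 * k)) from congr($this x)
  refine b.ext fun m => ?_
  simp only [ContinuousLinearMap.comp_apply, innerSL_apply_apply, hb]
  obtain ⟨n, rfl | rfl⟩ := Int.even_or_odd' m
  · rw [(hW n).1, hb]
    exact if_congr (by omega) rfl rfl
  · rw [(hW n).2, inner_zero_right, if_neg (by omega)]

theorem HilbertBasis.hasSum_norm_inner_sq_s12 (b : HilbertBasis ι 𝕜 E) (x : E) :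
    HasSum (fun i => ‖inner 𝕜 (b i) x‖ ^ 2) (‖x‖ ^ 2) := by
  simpa [b.repr_apply_apply, b.repr.norm_map] using lp.hasSum_norm (p := 2) (by norm_num) (b.repr x)

theorem HilbertBasis.hasSum_norm_inner_sq_nat (b : HilbertBasis ℤ 𝕜 E) {x : E}
    (hx : ∀ k < 0, inner 𝕜 (b k) x = 0) :
    HasSum (fun n : ℕ => ‖inner 𝕜 (b n) x‖ ^ 2) (‖x‖ ^ 2) := by
  have h := b.hasSum_norm_inner_sq_s12 x
  rw [← Nat.cast_injective.hasSum_iff fun k hk => ?_] at h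
  · exact h
  · rw [hx k (not_le.mp fun h => hk ⟨k.toNat, Int.toNat_of_nonneg h⟩), norm_zero,
      zero_pow two_ne_zero]

end HilbertBasis

section HasSum

variable {G : Type*} [AddCommGroup G] [TopologicalSpace G] [IsTopologicalAddGroup G] [T2Space G]

theorem eq_zero_of_hasSum_of_hasSum_succ {g : ℕ → G} {s : G}
    (hg : HasSum g s) (hg' : HasSum (fun n => g (n + 1)) s) : g 0 = 0 := by
  have hs : HasSum (fun n => g (n + 1)) (s - g 0) := by
    simpa using (hasSum_nat_add_iff' 1).mpr hg
  exact sub_eq_self.mp (hg'.unique hs).symm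

theorem eq_zero_of_forall_hasSum_two_mul_sub {g : ℤ → G} {s : G}
    (hg : ∀ m : ℤ, HasSum (fun k : ℕ => g (2 * k - m)) s) : g = 0 := by
  funext n
  have hbase : HasSum (fun k : ℕ => g (2 * k + n)) s := by
    simpa only [sub_neg_eq_add] using hg (-n)
  have hshift : HasSum (fun k : ℕ => g (2 * (k + 1 : ℕ) + n)) s := by
    convert hg (-n - 2) using 3
    push_cast
    ring
  simpa using eq_zero_of_hasSum_of_hasSum_succ hbase hshift

end HasSum

/- `M` models `M_φ`: a bounded operator whose matrix `⟪e i, M (e j)⟫` depends only on `i - j` is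
multiplication by the `L^∞` function `φ` with `φ̂ = a`, and `φ = 0 ↔ a = 0`. -/
theorem eq_zero_of_isometry_general
    {L2 : Type*} [NormedAddCommGroup L2] [InnerProductSpace ℂ L2]
    -- the orthonormal (Fourier) basis `e n ↔ zⁿ` of `L²(𝕋)`
    (e : HilbertBasis ℤ ℂ L2)
    -- the Hardy space `H²`, the closed linear span of `{e n : n ≥ 0}`
    (H2 : Submodule ℂ L2) [CompleteSpace H2]
    (hH2 : H2 = (Submodule.span ℂ (Set.range fun n : ℕ => e (n : ℤ))).topologicalClosure)
    (eH : ℕ → H2) (heH : ∀ n : ℕ, (eH n : L2) = e (n : ℤ))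
    -- the operator `W`: `W e_{2n} = e n`, `W e_{2n+1} = 0` for all `n ∈ ℤ`
    (W : L2 →L[ℂ] L2)
    (hW : ∀ n : ℤ, W (e (2 * n)) = e n ∧ W (e (2 * n + 1)) = 0)
    -- the operator `K : H² → L²`: `K e_{2n} = e n`, `K e_{2n+1} = e_{-n-1}` for all `n ≥ 0`
    (K : H2 →L[ℂ] L2)
    (hK : ∀ n : ℕ, K (eH (2 * n)) = e (n : ℤ) ∧ K (eH (2 * n + 1)) = e (-(n : ℤ) - 1))
    -- `φ ∈ L^∞`, encoded by its Fourier coefficients `a` and multiplication operator `M = M_φ`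
    (a : ℤ → ℂ) (M : L2 →L[ℂ] L2)
    (hM : ∀ i j : ℤ, ⟪e i, M (e j)⟫ = a (i - j))
    -- the slant H-Toeplitz operator `V_φ = W P M_φ K : H² → H²`
    (V : H2 →L[ℂ] H2)
    (hV : ∀ f : H2, (V f : L2) = W ↑(H2.orthogonalProjection (M (K f))))
    (hiso : (ContinuousLinearMap.adjoint V).comp V = ContinuousLinearMap.id ℂ H2) :
    a = 0 := by
  have hV_coeff (j : ℕ) (m : ℤ) (hj : K (eH j) = e m) (k : ℤ) :
      ⟪e k, (V (eH j) : L2)⟫ = if 0 ≤ k then a (2 * k - m) else 0 := by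
    rw [hV, e.inner_apply_eq_inner_two_mul_s12 hW,
      e.orthonormal.inner_orthogonalProjectionOnto_eq_ite_nonneg H2 hH2, hj, hM]
    exact if_congr (by omega) rfl rfl
  have hK_surj (m : ℤ) : ∃ j, K (eH j) = e m := by
    rcases le_or_gt 0 m with hm | hm
    · exact ⟨2 * m.toNat, by rw [(hK _).1, Int.toNat_of_nonneg hm]⟩
    · refine ⟨2 * (-m - 1).toNat + 1, ?_⟩
      rw [(hK _).2, Int.toNat_of_nonneg (by omega)]
      congr 1
      ring
  have hnorm_V (j : ℕ) : ‖(V (eH j) : L2)‖ = 1 := by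
    change ‖V (eH j)‖ = 1
    rw [V.norm_map_iff_adjoint_comp_self.mpr hiso, ← e.orthonormal.1 j, ← heH]
    rfl
  have hsum (m : ℤ) : HasSum (fun k : ℕ => ‖a (2 * k - m)‖ ^ 2) 1 := by
    obtain ⟨j, hj⟩ := hK_surj m
    have h := e.hasSum_norm_inner_sq_nat (x := (V (eH j) : L2)) fun k hk => by
      rw [hV_coeff j m hj, if_neg hk.not_ge]
    simpa [hV_coeff j m hj, hnorm_V] using h
  have hnorm_sq := eq_zero_of_forall_hasSum_two_mul_sub (g := fun n => ‖a n‖ ^ 2) hsum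
  funext n
  simpa using congr_fun hnorm_sq n

/-- If `V_φ` is an isometry on `H²` (`V_φ* V_φ = I`, equivalently
`‖V_φ f‖ = ‖f‖` for all `f`), then `φ = 0`; so no nonzero slant H-Toeplitz operator is an
isometry. -/
theorem eq_zero_of_isometry
    {L2 : Type*} [NormedAddCommGroup L2] [InnerProductSpace ℂ L2] [CompleteSpace L2]
    -- the orthonormal (Fourier) basis `e n ↔ zⁿ` of `L²(𝕋)`
    (e : HilbertBasis ℤ ℂ L2)
    -- the Hardy space `H²`, the closed linear span of `{e n : n ≥ 0}`
    (H2 : Submodule ℂ L2) [CompleteSpace H2]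
    (hH2 : H2 = (Submodule.span ℂ (Set.range fun n : ℕ => e (n : ℤ))).topologicalClosure)
    (eH : ℕ → H2) (heH : ∀ n : ℕ, (eH n : L2) = e (n : ℤ))
    -- the operator `W`: `W e_{2n} = e n`, `W e_{2n+1} = 0` for all `n ∈ ℤ`
    (W : L2 →L[ℂ] L2)
    (hW : ∀ n : ℤ, W (e (2 * n)) = e n ∧ W (e (2 * n + 1)) = 0)
    -- the operator `K : H² → L²`: `K e_{2n} = e n`, `K e_{2n+1} = e_{-n-1}` for all `n ≥ 0`
    (K : H2 →L[ℂ] L2)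
    (hK : ∀ n : ℕ, K (eH (2 * n)) = e (n : ℤ) ∧ K (eH (2 * n + 1)) = e (-(n : ℤ) - 1))
    -- `φ ∈ L^∞`, encoded by its Fourier coefficients `a` and multiplication operator `M = M_φ`
    (a : ℤ → ℂ) (M : L2 →L[ℂ] L2)
    (hM : ∀ i j : ℤ, ⟪e i, M (e j)⟫ = a (i - j))
    -- the slant H-Toeplitz operator `V_φ = W P M_φ K : H² → H²`
    (V : H2 →L[ℂ] H2)
    (hV : ∀ f : H2, (V f : L2) = W ↑(H2.orthogonalProjection (M (K f))))
    (hiso : (ContinuousLinearMap.adjoint V).comp V = ContinuousLinearMap.id ℂ H2) :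
    a = 0 :=
  eq_zero_of_isometry_general e H2 hH2 eH heH W hW K hK a M hM V hV hiso
end

section
/- For φ ∈ L^∞(𝕋), the slant Toeplitz operator B_φ = P W M_φ|_{H²} is a slant H-Toeplitz operator, i.e. B_φ = V_ψ for some ψ ∈ L^∞(𝕋), if and only if φ = 0. -/
/-! For `i ≥ 0` both operators have matrix entries `⟪e i, X e_j⟫ = ⟪e (2i), T (K' e_j)⟫`, with
`T = M_φ`, `K' = id` for `B_φ` and `T = M_ψ`, `K' = K` for `V_ψ`, because `W* e_i = e_{2i}` and
`P` fixes `e_i`. Comparing the columns `j = 2n` and `j = 2n + 1` gives `a (2i - 2n) = b (2i - n)`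
and `a (2i - 2n - 1) = b (2i + n + 1)`, where `b` are the Fourier coefficients of `ψ`. The
diagonal `i = n` gives `b = a 0` on `ℕ`, whence `a` is constant; as the coefficients of the
column `M e₀` it is square-summable, hence zero. -/

open scoped ComplexInnerProductSpace

lemma HilbertBasis.clm_ext_s18 {ι 𝕜 E F : Type*} [RCLike 𝕜] [NormedAddCommGroup E]
    [InnerProductSpace 𝕜 E] [NormedAddCommGroup F] [NormedSpace 𝕜 F]
    (b : HilbertBasis ι 𝕜 E) {T S : E →L[𝕜] F} (h : ∀ i, T (b i) = S (b i)) : T = S :=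
  ContinuousLinearMap.ext_on (Submodule.dense_iff_topologicalClosure_eq_top.mpr b.dense_span)
    (Set.forall_mem_range.mpr h)

lemma HilbertBasis.eq_zero_of_forall_inner_eq_zero {ι 𝕜 E : Type*} [RCLike 𝕜]
    [NormedAddCommGroup E] [InnerProductSpace 𝕜 E] (b : HilbertBasis ι 𝕜 E) {x : E}
    (h : ∀ i, inner 𝕜 (b i) x = 0) : x = 0 :=
  b.repr.map_eq_zero_iff.mp <| lp.ext <| funext fun i => by rw [b.repr_apply_apply, h]; rfl

lemma Orthonormal.eq_zero_of_forall_inner_eq {ι 𝕜 E : Type*} [Infinite ι] [RCLike 𝕜]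
    [NormedAddCommGroup E] [InnerProductSpace 𝕜 E] {v : ι → E} (hv : Orthonormal 𝕜 v)
    {x : E} {c : 𝕜} (h : ∀ i, inner 𝕜 (v i) x = c) : c = 0 := by
  have hsum := hv.inner_products_summable x
  simp only [h] at hsum
  simpa using (summable_const_iff _).mp hsum

lemma HilbertBasis.inner_apply_eq_inner_two_mul_s18 {L2 : Type*} [NormedAddCommGroup L2]
    [InnerProductSpace ℂ L2] (e : HilbertBasis ℤ ℂ L2) {W : L2 →L[ℂ] L2}
    (hW : ∀ n : ℤ, W (e (2 * n)) = e n ∧ W (e (2 * n + 1)) = 0) (i : ℤ) (y : L2) :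
    ⟪e i, W y⟫ = ⟪e (2 * i), y⟫ := by
  suffices (innerSL ℂ (e i)).comp W = innerSL ℂ (e (2 * i)) from
    congrArg (fun T : L2 →L[ℂ] ℂ => T y) this
  refine e.clm_ext_s18 fun m => ?_
  simp only [ContinuousLinearMap.comp_apply, innerSL_apply_apply]
  obtain ⟨k, rfl | rfl⟩ := Int.even_or_odd' m
  · rw [(hW k).1, orthonormal_iff_ite.mp e.orthonormal, orthonormal_iff_ite.mp e.orthonormal]
    simp
  · rw [(hW k).2, inner_zero_right, orthonormal_iff_ite.mp e.orthonormal, if_neg (by omega)]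

lemma apply_eq_apply_zero_of_slant_relations {a b : ℤ → ℂ}
    (h_even : ∀ i n : ℕ, a (2 * i - 2 * n) = b (2 * i - n))
    (h_odd : ∀ i n : ℕ, a (2 * i - (2 * n + 1)) = b (2 * i - (-n - 1))) (k : ℤ) : a k = a 0 := by
  have hb : ∀ m : ℤ, 0 ≤ m → b m = a 0 := fun m hm => by
    lift m to ℕ using hm
    simpa [two_mul] using (h_even m m).symm
  obtain ⟨c, rfl | rfl⟩ := Int.even_or_odd' k
  · obtain ⟨m, rfl | rfl⟩ := Int.eq_nat_or_neg c
    · rw [← hb (2 * m) (by positivity)]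
      simpa using h_even m 0
    · rw [← hb 0 le_rfl]
      convert h_even m (2 * m) using 2 <;> push_cast <;> ring
  · obtain ⟨m, hm | hm⟩ := Int.eq_nat_or_neg (c + 1)
    · rw [← hb (2 * m + 1) (by positivity)]
      convert h_odd m 0 using 2 <;> push_cast <;> omega
    · rw [← hb (m + 1) (by positivity)]
      convert h_odd 0 m using 2 <;> push_cast <;> omega

/- A symbol `φ ∈ L^∞(𝕋)` is encoded by `M = M_φ` together with its Fourier coefficients `a`,
through the Laurent matrix `⟪e i, M e_j⟫ = a (i - j)`; the paper's `⟨f, g⟩ = ∫ f ḡ` is Mathlib's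
`⟪g, f⟫`, so the paper's entry `⟨A e_j, e_i⟩` is `⟪e i, A e_j⟫` here. -/
theorem slantToeplitz_is_slantHToeplitz_iff_zero_general
    {L2 : Type*} [NormedAddCommGroup L2] [InnerProductSpace ℂ L2]
    -- the orthonormal (Fourier) basis `e n ↔ zⁿ` of `L²(𝕋)`
    (e : HilbertBasis ℤ ℂ L2)
    -- the Hardy space `H²`, the closed linear span of `{e n : n ≥ 0}`
    (H2 : Submodule ℂ L2) [CompleteSpace H2]
    (eH : ℕ → H2) (heH : ∀ n : ℕ, (eH n : L2) = e (n : ℤ))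
    -- the operator `W`: `W e_{2n} = e n`, `W e_{2n+1} = 0` for all `n ∈ ℤ`
    (W : L2 →L[ℂ] L2)
    (hW : ∀ n : ℤ, W (e (2 * n)) = e n ∧ W (e (2 * n + 1)) = 0)
    -- the operator `K : H² → L²`: `K e_{2n} = e n`, `K e_{2n+1} = e_{-n-1}` for all `n ≥ 0`
    (K : H2 →L[ℂ] L2)
    (hK : ∀ n : ℕ, K (eH (2 * n)) = e (n : ℤ) ∧ K (eH (2 * n + 1)) = e (-(n : ℤ) - 1))
    -- `φ ∈ L^∞`, encoded by its Fourier coefficients `a` and multiplication operator `M = M_φ`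
    (a : ℤ → ℂ) (M : L2 →L[ℂ] L2)
    (hM : ∀ i j : ℤ, ⟪e i, M (e j)⟫ = a (i - j))
    -- the slant Toeplitz operator `B_φ = P W M_φ|_{H²}`
    (B : H2 →L[ℂ] H2)
    (hB : ∀ f : H2, B f = Submodule.orthogonalProjectionOnto H2 (W (M (f : L2)))) :
    (∃ (b : ℤ → ℂ) (N : L2 →L[ℂ] L2),
      (∀ i j : ℤ, ⟪e i, N (e j)⟫ = b (i - j)) ∧
      ∀ f : H2, (B f : L2) = W ↑(Submodule.orthogonalProjectionOnto H2 (N (K f)))) ↔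
    a = 0 := by
  have hP (i : ℕ) (x : L2) : ⟪e i, ↑(H2.orthogonalProjectionOnto x)⟫ = ⟪e i, x⟫ := by
    rw [← heH]
    exact Submodule.inner_orthogonalProjectionOnto_eq_of_mem_left (eH i) x
  have hWe := e.inner_apply_eq_inner_two_mul_s18 hW
  constructor
  · rintro ⟨b, N, hN, hV⟩
    have h_matrix (i j : ℕ) : a (2 * i - j) = ⟪e (2 * (i : ℤ)), N (K (eH j))⟫ := by
      calc a (2 * i - j) = ⟪e i, B (eH j)⟫ := by rw [hB, hP, hWe, heH, hM]
        _ = ⟪e i, W ↑(H2.orthogonalProjectionOnto (N (K (eH j))))⟫ := by rw [hV]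
        _ = ⟪e (2 * (i : ℤ)), N (K (eH j))⟫ := by rw [hWe]; exact_mod_cast hP (2 * i) _
    have hconst := apply_eq_apply_zero_of_slant_relations (b := b)
      (fun i n => by simpa [(hK n).1, hN] using h_matrix i (2 * n))
      (fun i n => by simpa [(hK n).2, hN] using h_matrix i (2 * n + 1))
    have ha0 : a 0 = 0 := e.orthonormal.eq_zero_of_forall_inner_eq (x := M (e 0)) fun i => by
      rw [hM, sub_zero, hconst]
    funext k
    rw [hconst, ha0]
    rfl
  · rintro rfl
    have hM0 : M = 0 := e.clm_ext_s18 fun j => e.eq_zero_of_forall_inner_eq_zero fun i => hM i j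
    exact ⟨0, 0, fun _ _ => by simp, fun f => by simp [hB, hM0]⟩

/-- The slant Toeplitz operator `B_φ = P W M_φ|_{H²}` is a slant
H-Toeplitz operator (`B_φ = V_ψ` for some `ψ ∈ L^∞`) iff `φ = 0`. -/
theorem slantToeplitz_is_slantHToeplitz_iff_zero
    {L2 : Type*} [NormedAddCommGroup L2] [InnerProductSpace ℂ L2] [CompleteSpace L2]
    -- the orthonormal (Fourier) basis `e n ↔ zⁿ` of `L²(𝕋)`
    (e : HilbertBasis ℤ ℂ L2)
    -- the Hardy space `H²`, the closed linear span of `{e n : n ≥ 0}`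
    (H2 : Submodule ℂ L2) [CompleteSpace H2]
    (hH2 : H2 = (Submodule.span ℂ (Set.range fun n : ℕ => e (n : ℤ))).topologicalClosure)
    (eH : ℕ → H2) (heH : ∀ n : ℕ, (eH n : L2) = e (n : ℤ))
    -- the operator `W`: `W e_{2n} = e n`, `W e_{2n+1} = 0` for all `n ∈ ℤ`
    (W : L2 →L[ℂ] L2)
    (hW : ∀ n : ℤ, W (e (2 * n)) = e n ∧ W (e (2 * n + 1)) = 0)
    -- the operator `K : H² → L²`: `K e_{2n} = e n`, `K e_{2n+1} = e_{-n-1}` for all `n ≥ 0`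
    (K : H2 →L[ℂ] L2)
    (hK : ∀ n : ℕ, K (eH (2 * n)) = e (n : ℤ) ∧ K (eH (2 * n + 1)) = e (-(n : ℤ) - 1))
    -- `φ ∈ L^∞`, encoded by its Fourier coefficients `a` and multiplication operator `M = M_φ`
    (a : ℤ → ℂ) (M : L2 →L[ℂ] L2)
    (hM : ∀ i j : ℤ, ⟪e i, M (e j)⟫ = a (i - j))
    -- the slant Toeplitz operator `B_φ = P W M_φ|_{H²}`
    (B : H2 →L[ℂ] H2)
    (hB : ∀ f : H2, B f = Submodule.orthogonalProjectionOnto H2 (W (M (f : L2)))) :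
    (∃ (b : ℤ → ℂ) (N : L2 →L[ℂ] L2),
      (∀ i j : ℤ, ⟪e i, N (e j)⟫ = b (i - j)) ∧
      ∀ f : H2, (B f : L2) = W ↑(Submodule.orthogonalProjectionOnto H2 (N (K f)))) ↔
    a = 0 :=
  slantToeplitz_is_slantHToeplitz_iff_zero_general e H2 eH heH W hW K hK a M hM B hB
end

section
/- Let φ ∈ L^∞(𝕋). If the slant Hankel operator L_φ = W H_φ is a slant H-Toeplitz operator, i.e. L_φ = V_ψ for some ψ ∈ L^∞(𝕋), then φ̂(1) = 0 and φ̂(n) = 0 for every integer n ≥ 3; equivalently, φ is orthogonal in L² to z + z³ψ for every ψ ∈ H^∞, i.e. φ ∈ (z + z³H^∞)^⊥ where z + z³H^∞ = {z + z³ψ : ψ ∈ H^∞}. -/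
/-!
Pairing with `e m` and `W* e m = e (2m)` computes the matrices of both operators on the basis
`eH n` of `H²`: `L_φ` has entries `φ̂(2m + n + 1)`, while `V_ψ` has entries `ψ̂(2m - k)` on
`eH (2k)` and `ψ̂(2m + k + 1)` on `eH (2k + 1)`. Matching entries of `L_φ` that `V_ψ` forces to
be equal gives `φ̂(2k + 1) = φ̂(2k + 7)` and `φ̂(2k + 4) = φ̂(2k + 6)` for `k ≥ 0`. So the odd
coefficients from `1` on and the even ones from `4` on are periodic, and being Fourier
coefficients of an `L²` function they tend to `0`, hence vanish.
-/

open scoped ComplexInnerProductSpace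

open Filter Topology Function

theorem Orthonormal.tendsto_inner_cofinite {ι 𝕜 E : Type*} [RCLike 𝕜] [NormedAddCommGroup E]
    [InnerProductSpace 𝕜 E] {v : ι → E} (hv : Orthonormal 𝕜 v) (x : E) :
    Tendsto (fun i => inner 𝕜 (v i) x) cofinite (𝓝 0) := by
  rw [tendsto_zero_iff_norm_tendsto_zero]
  simpa using (hv.inner_products_summable (x := x)).tendsto_cofinite_zero.sqrt

theorem Function.Periodic.eq_of_tendsto {E : Type*} [TopologicalSpace E] [T2Space E]
    {f : ℕ → E} {c : ℕ} (hf : Periodic f c) (hc : 0 < c) {y : E}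
    (h : Tendsto f atTop (𝓝 y)) (n : ℕ) : f n = y := by
  have hshift : Tendsto (fun k : ℕ => n + k * c) atTop atTop :=
    tendsto_atTop_mono (fun k => le_add_left (Nat.le_mul_of_pos_right k hc)) tendsto_id
  exact tendsto_const_nhds_iff.mp ((h.comp hshift).congr fun k => hf.nat_mul k n)

theorem Orthonormal.tendsto_cofinite_of_inner_apply_eq_sub {E : Type*} [NormedAddCommGroup E]
    [InnerProductSpace ℂ E] {v : ℤ → E} (hv : Orthonormal ℂ v) {T : E →L[ℂ] E} {c : ℤ → ℂ}
    (hT : ∀ i j : ℤ, ⟪v i, T (v j)⟫ = c (i - j)) : Tendsto c cofinite (𝓝 0) := by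
  simpa [hT] using hv.tendsto_inner_cofinite (T (v 0))

theorem eq_zero_of_slant_relations {E : Type*} [TopologicalSpace E] [T2Space E] [Zero E]
    {a b : ℤ → E} (ha : Tendsto a atTop (𝓝 0))
    (hodd : ∀ m k : ℕ, a (2 * m + 2 * k + 1) = b (2 * m - k))
    (heven : ∀ m k : ℕ, a (2 * m + 2 * k + 2) = b (2 * m + k + 1)) :
    a 1 = 0 ∧ ∀ n : ℤ, 3 ≤ n → a n = 0 := by
  have hodd_periodic : Periodic (fun k : ℕ => a (2 * k + 1)) 3 := fun k => by
    have h0 := hodd 0 k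
    have h1 := hodd 1 (k + 2)
    push_cast at h0 h1 ⊢
    ring_nf at h0 h1 ⊢
    rw [h0, h1]
  have heven_periodic : Periodic (fun k : ℕ => a (2 * k + 4)) 1 := fun k => by
    have h0 := heven 1 k
    have h1 := heven 0 (k + 2)
    push_cast at h0 h1 ⊢
    ring_nf at h0 h1 ⊢
    rw [h0, h1]
  have hlin : ∀ q : ℤ, Tendsto (fun k : ℕ => 2 * (k : ℤ) + q) atTop atTop := fun q =>
    tendsto_atTop_atTop.2 fun r => ⟨(r - q).toNat, fun k hk => by omega⟩
  have hodd_zero := hodd_periodic.eq_of_tendsto (by norm_num) (ha.comp (hlin 1))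
  have heven_zero := heven_periodic.eq_of_tendsto one_pos (ha.comp (hlin 4))
  refine ⟨by simpa using hodd_zero 0, fun n hn => ?_⟩
  obtain ⟨j, hj⟩ := Int.eq_ofNat_of_zero_le (sub_nonneg.2 hn)
  obtain ⟨t, rfl | rfl⟩ := Nat.even_or_odd' j
  · convert hodd_zero (t + 1) using 2
    push_cast at hj ⊢
    omega
  · convert heven_zero t using 2
    push_cast at hj ⊢
    omega

section SlantCompression

variable {L2 : Type*} [NormedAddCommGroup L2] [InnerProductSpace ℂ L2] {e : HilbertBasis ℤ ℂ L2}
  {W : L2 →L[ℂ] L2}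

theorem inner_basis_slant (hW : ∀ n : ℤ, W (e (2 * n)) = e n ∧ W (e (2 * n + 1)) = 0)
    (m : ℤ) (x : L2) : ⟪e m, W x⟫ = ⟪e (2 * m), x⟫ := by
  suffices (innerSL ℂ (e m)).comp W = innerSL ℂ (e (2 * m)) from
    congrArg (fun T : L2 →L[ℂ] ℂ => T x) this
  refine ContinuousLinearMap.ext_on
    (Submodule.dense_iff_topologicalClosure_eq_top.mpr e.dense_span) ?_
  rintro _ ⟨i, rfl⟩
  simp only [ContinuousLinearMap.comp_apply, innerSL_apply_apply]
  rw [orthonormal_iff_ite.mp e.orthonormal]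
  obtain ⟨q, rfl | rfl⟩ := Int.even_or_odd' i
  · rw [(hW q).1, orthonormal_iff_ite.mp e.orthonormal]
    simp
  · rw [(hW q).2, inner_zero_right, if_neg (by omega)]

variable {H2 : Submodule ℂ L2} [H2.HasOrthogonalProjection]

theorem inner_basis_slant_orthogonalProjectionOnto (he : ∀ n : ℕ, e n ∈ H2)
    (hW : ∀ n : ℤ, W (e (2 * n)) = e n ∧ W (e (2 * n + 1)) = 0) (m : ℕ) (y : L2) :
    ⟪e m, W (H2.orthogonalProjectionOnto y)⟫ = ⟪e (2 * m), y⟫ := by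
  rw [inner_basis_slant hW]
  exact H2.inner_orthogonalProjectionOnto_eq_of_mem_left ⟨e (2 * m : ℕ), he _⟩ y

theorem inner_basis_slant_compression_laurent (he : ∀ n : ℕ, e n ∈ H2)
    (hW : ∀ n : ℤ, W (e (2 * n)) = e n ∧ W (e (2 * n + 1)) = 0) {T : L2 →L[ℂ] L2} {c : ℤ → ℂ}
    (hT : ∀ i j : ℤ, ⟪e i, T (e j)⟫ = c (i - j)) (m : ℕ) (j : ℤ) :
    ⟪e m, W (H2.orthogonalProjectionOnto (T (e j)))⟫ = c (2 * m - j) := by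
  rw [inner_basis_slant_orthogonalProjectionOnto he hW, hT]

end SlantCompression

theorem slantHankel_is_slantHToeplitz_implies_general
    {L2 : Type*} [NormedAddCommGroup L2] [InnerProductSpace ℂ L2]
    -- the orthonormal (Fourier) basis `e n ↔ zⁿ` of `L²(𝕋)`
    (e : HilbertBasis ℤ ℂ L2)
    -- the Hardy space `H²`, the closed linear span of `{e n : n ≥ 0}`
    (H2 : Submodule ℂ L2) [CompleteSpace H2]
    (hH2 : H2 = (Submodule.span ℂ (Set.range fun n : ℕ => e (n : ℤ))).topologicalClosure)
    (eH : ℕ → H2)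
    -- the operator `W`: `W e_{2n} = e n`, `W e_{2n+1} = 0` for all `n ∈ ℤ`
    (W : L2 →L[ℂ] L2)
    (hW : ∀ n : ℤ, W (e (2 * n)) = e n ∧ W (e (2 * n + 1)) = 0)
    -- the operator `K : H² → L²`: `K e_{2n} = e n`, `K e_{2n+1} = e_{-n-1}` for all `n ≥ 0`
    (K : H2 →L[ℂ] L2)
    (hK : ∀ n : ℕ, K (eH (2 * n)) = e (n : ℤ) ∧ K (eH (2 * n + 1)) = e (-(n : ℤ) - 1))
    -- `φ ∈ L^∞`, encoded by its Fourier coefficients `a` and multiplication operator `M = M_φ`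
    (a : ℤ → ℂ) (M : L2 →L[ℂ] L2)
    (hM : ∀ i j : ℤ, ⟪e i, M (e j)⟫ = a (i - j))
    -- the flip operator `J : H² → L²`, `J e_n = e_{-n-1}`
    (J : H2 →L[ℂ] L2) (hJ : ∀ n : ℕ, J (eH n) = e (-(n : ℤ) - 1))
    -- the slant Hankel operator `L_φ = W H_φ`, where `H_φ = P M_φ J`
    (L : H2 →L[ℂ] H2)
    (hL : ∀ f : H2, (L f : L2) = W ↑(H2.orthogonalProjection (M (J f))))
    -- `L_φ` is a slant H-Toeplitz operator: `L_φ = V_ψ` for some `ψ ∈ L^∞`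
    (hLV : ∃ (b : ℤ → ℂ) (N : L2 →L[ℂ] L2),
      (∀ i j : ℤ, ⟪e i, N (e j)⟫ = b (i - j)) ∧
      ∀ f : H2, (L f : L2) = W ↑(H2.orthogonalProjection (N (K f)))) :
    a 1 = 0 ∧ ∀ n : ℤ, 3 ≤ n → a n = 0 := by
  obtain ⟨b, N, hN, hV⟩ := hLV
  have he : ∀ n : ℕ, e n ∈ H2 := fun n =>
    hH2 ▸ Submodule.le_topologicalClosure _ (Submodule.subset_span ⟨n, rfl⟩)
  have hL_entry : ∀ m n : ℕ, ⟪e m, (L (eH n) : L2)⟫ = a (2 * m + n + 1) := fun m n => by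
    rw [hL, hJ, inner_basis_slant_compression_laurent he hW hM]
    ring_nf
  refine eq_zero_of_slant_relations (b := b)
    ((e.orthonormal.tendsto_cofinite_of_inner_apply_eq_sub hM).mono_left
      (Int.cofinite_eq ▸ le_sup_right)) (fun m k => ?_) (fun m k => ?_)
  · have h := hL_entry m (2 * k)
    rw [hV, (hK k).1, inner_basis_slant_compression_laurent he hW hN] at h
    convert h.symm using 2
    push_cast
    ring
  · have h := hL_entry m (2 * k + 1)
    rw [hV, (hK k).2, inner_basis_slant_compression_laurent he hW hN] at h
    convert h.symm using 2 <;> push_cast <;> ring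

/-- If the slant Hankel operator `L_φ = W H_φ = W P M_φ J` is a slant
H-Toeplitz operator (`L_φ = V_ψ` for some `ψ ∈ L^∞`), then `φ̂(1) = 0` and `φ̂(n) = 0` for
every `n ≥ 3`, i.e. `φ ∈ (z + z³H^∞)^⊥`. -/
theorem slantHankel_is_slantHToeplitz_implies
    {L2 : Type*} [NormedAddCommGroup L2] [InnerProductSpace ℂ L2] [CompleteSpace L2]
    -- the orthonormal (Fourier) basis `e n ↔ zⁿ` of `L²(𝕋)`
    (e : HilbertBasis ℤ ℂ L2)
    -- the Hardy space `H²`, the closed linear span of `{e n : n ≥ 0}`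
    (H2 : Submodule ℂ L2) [CompleteSpace H2]
    (hH2 : H2 = (Submodule.span ℂ (Set.range fun n : ℕ => e (n : ℤ))).topologicalClosure)
    (eH : ℕ → H2) (heH : ∀ n : ℕ, (eH n : L2) = e (n : ℤ))
    -- the operator `W`: `W e_{2n} = e n`, `W e_{2n+1} = 0` for all `n ∈ ℤ`
    (W : L2 →L[ℂ] L2)
    (hW : ∀ n : ℤ, W (e (2 * n)) = e n ∧ W (e (2 * n + 1)) = 0)
    -- the operator `K : H² → L²`: `K e_{2n} = e n`, `K e_{2n+1} = e_{-n-1}` for all `n ≥ 0`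
    (K : H2 →L[ℂ] L2)
    (hK : ∀ n : ℕ, K (eH (2 * n)) = e (n : ℤ) ∧ K (eH (2 * n + 1)) = e (-(n : ℤ) - 1))
    -- `φ ∈ L^∞`, encoded by its Fourier coefficients `a` and multiplication operator `M = M_φ`
    (a : ℤ → ℂ) (M : L2 →L[ℂ] L2)
    (hM : ∀ i j : ℤ, ⟪e i, M (e j)⟫ = a (i - j))
    -- the flip operator `J : H² → L²`, `J e_n = e_{-n-1}`
    (J : H2 →L[ℂ] L2) (hJ : ∀ n : ℕ, J (eH n) = e (-(n : ℤ) - 1))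
    -- the slant Hankel operator `L_φ = W H_φ`, where `H_φ = P M_φ J`
    (L : H2 →L[ℂ] H2)
    (hL : ∀ f : H2, (L f : L2) = W ↑(H2.orthogonalProjection (M (J f))))
    -- `L_φ` is a slant H-Toeplitz operator: `L_φ = V_ψ` for some `ψ ∈ L^∞`
    (hLV : ∃ (b : ℤ → ℂ) (N : L2 →L[ℂ] L2),
      (∀ i j : ℤ, ⟪e i, N (e j)⟫ = b (i - j)) ∧
      ∀ f : H2, (L f : L2) = W ↑(H2.orthogonalProjection (N (K f)))) :
    a 1 = 0 ∧ ∀ n : ℤ, 3 ≤ n → a n = 0 :=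
  slantHankel_is_slantHToeplitz_implies_general e H2 hH2 eH W hW K hK a M hM J hJ L hL hLV
end
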